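/- In ℓ_p^m with 2 ≤ p < ∞, for all x, y ∈ ℝ^m, ‖x + y‖_p² ≤ ‖x‖_p² + 2⟨J(x), y⟩ + (p-1)‖y‖_p², where (J(x))ᵢ = ‖x‖_p^(2-p) |xᵢ|^(p-1) sign(xᵢ). -/

import Mathlib

/-- The `p`-norm on `ℝ^m`. -/
noncomputable def pNorm {m : ℕ} (p : ℝ) (x : Fin m → ℝ) : ℝ :=
  (∑ i, |x i| ^ p) ^ (1 / p)

/-- The normalized duality mapping of `ℓ_p^m`:
`(J(x))ᵢ = ‖x‖_p^(2-p) |xᵢ|^(p-1) sign(xᵢ)`. -/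
noncomputable def dualityMap {m : ℕ} (p : ℝ) (x : Fin m → ℝ) : Fin m → ℝ :=
  fun i => pNorm p x ^ (2 - p) * |x i| ^ (p - 1) * Real.sign (x i)

open Real Filter Finset

/-! ### Auxiliary scalar lemmas -/

theorem XuAux.abs_rpow_sign_eq (q u : ℝ) :
    |u| ^ (q - 1) * Real.sign u = |u| ^ (q - 2) * u := by
  rcases lt_trichotomy u 0 with h | rfl | h
  · rw [Real.sign_of_neg h, abs_of_neg h]
    rw [show q - 1 = (q - 2) + 1 by ring, Real.rpow_add_one (by linarith : (-u) ≠ 0)]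
    ring
  · simp [Real.sign_zero]
  · rw [Real.sign_of_pos h, abs_of_pos h]
    rw [show q - 1 = (q - 2) + 1 by ring, Real.rpow_add_one (ne_of_gt h)]
    ring

theorem XuAux.abs_rpow_mul_sq (p : ℝ) (hp : 2 ≤ p) (u : ℝ) :
    |u| ^ (p - 2) * u ^ 2 = |u| ^ p := by
  rcases eq_or_ne u 0 with rfl | hu
  · rw [abs_zero, Real.zero_rpow (by linarith : p ≠ 0)]
    ring
  · have h2 : u ^ 2 = |u| ^ ((2:ℕ) : ℝ) := by
      rw [Real.rpow_natCast, sq_abs]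
    rw [h2, ← Real.rpow_add (abs_pos.mpr hu)]
    norm_num

theorem XuAux.hasDerivAt_L2 {p : ℝ} (hp : 2 ≤ p) (u : ℝ) :
    HasDerivAt (fun v : ℝ => |v| ^ (p - 2) * v) ((p - 1) * |u| ^ (p - 2)) u := by
  rcases eq_or_lt_of_le hp with rfl | hp2
  · have he : ∀ v : ℝ, |v| ^ ((2:ℝ) - 2) * v = v := fun v => by
      rw [sub_self, Real.rpow_zero, one_mul]
    simp only [he]
    rw [show ((2:ℝ) - 1) * |u| ^ ((2:ℝ) - 2) = 1 by
      rw [sub_self, Real.rpow_zero]; norm_num]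
    exact hasDerivAt_id u
  · rcases eq_or_ne u 0 with rfl | hu
    · rw [hasDerivAt_iff_tendsto_slope]
      have h0 : |(0:ℝ)| ^ (p - 2) = 0 := by
        rw [abs_zero, Real.zero_rpow (by linarith)]
      rw [h0, mul_zero]
      have h1 : ContinuousAt (fun x : ℝ => x ^ (p - 2)) |(0:ℝ)| := by
        rw [abs_zero]
        exact Real.continuousAt_rpow_const 0 (p - 2) (Or.inr (by linarith))
      have h2 : Tendsto (fun v : ℝ => |v| ^ (p - 2)) (nhds 0) (nhds 0) := by
        have := (h1.comp continuous_abs.continuousAt).tendsto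
        simpa [Function.comp_def, abs_zero, Real.zero_rpow (by linarith : p - 2 ≠ 0)] using this
      refine (h2.mono_left nhdsWithin_le_nhds).congr' ?_
      filter_upwards [self_mem_nhdsWithin] with v hv
      simp only [Set.mem_compl_iff, Set.mem_singleton_iff] at hv
      simp only [slope_def_field, mul_zero, sub_zero]
      rw [mul_div_assoc, div_self hv, mul_one]
    · have habs : HasDerivAt (fun v : ℝ => |v| ^ (p - 2))
          ((p - 2) * |u| ^ (p - 2 - 1) * (SignType.sign u : ℝ)) u := by
        have := (Real.hasDerivAt_rpow_const (p := p - 2)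
          (Or.inl (abs_ne_zero.mpr hu))).comp u (hasDerivAt_abs hu)
        simpa [Function.comp_def, mul_assoc] using this
      have hmul := habs.fun_mul (hasDerivAt_id u)
      refine hmul.congr_deriv ?_
      symm
      have hsg : (SignType.sign u : ℝ) * u = |u| := by
        rcases lt_or_gt_of_ne hu with h | h
        · simp [h, abs_of_neg h]
        · simp [h, abs_of_pos h]
      have h3 : |u| ^ (p - 2 - 1) * |u| = |u| ^ (p - 2) := by
        rw [← Real.rpow_add_one (abs_ne_zero.mpr hu) (p - 2 - 1)]
        norm_num
      simp only [id_eq, mul_one]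
      rw [mul_assoc ((p-2) * |u| ^ (p - 2 - 1)), hsg, mul_assoc, h3]
      ring

/-! ### The basic functions of `t` -/

noncomputable def XuAux.Sf {m : ℕ} (p : ℝ) (x y : Fin m → ℝ) (t : ℝ) : ℝ :=
  ∑ i, |x i + t * y i| ^ p

noncomputable def XuAux.Af {m : ℕ} (p : ℝ) (x y : Fin m → ℝ) (t : ℝ) : ℝ :=
  ∑ i, |x i + t * y i| ^ (p - 2) * (x i + t * y i) * y i

noncomputable def XuAux.Cf {m : ℕ} (p : ℝ) (x y : Fin m → ℝ) (t : ℝ) : ℝ :=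
  ∑ i, |x i + t * y i| ^ (p - 2) * y i ^ 2

noncomputable def XuAux.phiF {m : ℕ} (p : ℝ) (x y : Fin m → ℝ) (t : ℝ) : ℝ :=
  XuAux.Sf p x y t ^ ((2:ℝ) / p)

noncomputable def XuAux.psiF {m : ℕ} (p : ℝ) (x y : Fin m → ℝ) (t : ℝ) : ℝ :=
  2 * XuAux.Sf p x y t ^ ((2 - p) / p) * XuAux.Af p x y t

namespace XuAux

variable {m : ℕ} {p : ℝ} (x y : Fin m → ℝ)

theorem Sf_nonneg (t : ℝ) : 0 ≤ Sf p x y t :=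
  Finset.sum_nonneg fun i _ => Real.rpow_nonneg (abs_nonneg _) _

theorem hasDerivAt_inner (i : Fin m) (t : ℝ) :
    HasDerivAt (fun t : ℝ => x i + t * y i) (y i) t := by
  simpa using ((hasDerivAt_id t).mul_const (y i)).const_add (x i)

theorem hasDerivAt_Sf (hp : 2 ≤ p) (t : ℝ) :
    HasDerivAt (Sf p x y) (p * Af p x y t) t := by
  have h : ∀ i ∈ Finset.univ, HasDerivAt (fun t : ℝ => |x i + t * y i| ^ p)
      (p * |x i + t * y i| ^ (p - 2) * (x i + t * y i) * y i) t := by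
    intro i _
    have := (hasDerivAt_abs_rpow (x i + t * y i) (by linarith : (1:ℝ) < p)).comp t
      (hasDerivAt_inner x y i t)
    simpa [Function.comp_def, mul_assoc] using this
  have := HasDerivAt.fun_sum h
  unfold Sf Af
  refine this.congr_deriv ?_
  symm
  rw [Finset.mul_sum]
  exact Finset.sum_congr rfl fun i _ => by ring

theorem hasDerivAt_Af (hp : 2 ≤ p) (t : ℝ) :
    HasDerivAt (Af p x y) ((p - 1) * Cf p x y t) t := by
  have h : ∀ i ∈ Finset.univ, HasDerivAt
      (fun t : ℝ => |x i + t * y i| ^ (p - 2) * (x i + t * y i) * y i)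
      (((p - 1) * |x i + t * y i| ^ (p - 2)) * y i * y i) t := by
    intro i _
    have := ((hasDerivAt_L2 hp (x i + t * y i)).comp t
      (hasDerivAt_inner x y i t)).mul_const (y i)
    simp only [Function.comp_def] at this
    convert this using 2
  have := HasDerivAt.fun_sum h
  unfold Af Cf
  refine this.congr_deriv ?_
  symm
  rw [Finset.mul_sum]
  exact Finset.sum_congr rfl fun i _ => by ring

theorem hasDerivAt_phi (hp : 2 ≤ p) {t : ℝ} (hS : Sf p x y t ≠ 0) :
    HasDerivAt (phiF p x y) (psiF p x y t) t := by
  have hp0 : p ≠ 0 := by intro h; rw [h] at hp; norm_num at hp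
  have h := (Real.hasDerivAt_rpow_const (p := (2:ℝ)/p) (Or.inl hS)).comp t
    (hasDerivAt_Sf x y hp t)
  simp only [Function.comp_def] at h
  unfold phiF psiF
  refine h.congr_deriv ?_
  symm
  rw [show (2:ℝ)/p - 1 = (2 - p)/p by field_simp]
  field_simp

theorem hasDerivAt_psi (hp : 2 ≤ p) {t : ℝ} (hS : Sf p x y t ≠ 0) :
    HasDerivAt (psiF p x y)
      (2 * ((2 - p) * Sf p x y t ^ ((2 - 2*p)/p) * Af p x y t ^ 2
        + (p - 1) * Sf p x y t ^ ((2 - p)/p) * Cf p x y t)) t := by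
  have hp0 : p ≠ 0 := by intro h; rw [h] at hp; norm_num at hp
  have h1 : HasDerivAt (fun t => Sf p x y t ^ ((2 - p)/p))
      (((2 - p)/p) * Sf p x y t ^ ((2 - p)/p - 1) * (p * Af p x y t)) t := by
    have := (Real.hasDerivAt_rpow_const (p := (2 - p)/p) (Or.inl hS)).comp t
      (hasDerivAt_Sf x y hp t)
    simpa [Function.comp_def, mul_assoc] using this
  have h2 := (h1.const_mul 2).fun_mul (hasDerivAt_Af x y hp t)
  unfold psiF
  refine h2.congr_deriv ?_
  symm
  rw [show (2 - p)/p - 1 = (2 - 2*p)/p by field_simp; ring]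
  field_simp

end XuAux
namespace XuAux

variable {m : ℕ} {p : ℝ} (x y : Fin m → ℝ)

theorem key_bound (hp : 2 ≤ p) {t : ℝ} (hS : Sf p x y t ≠ 0) :
    Sf p x y t ^ ((2 - p)/p) * Cf p x y t ≤ (∑ i, |y i| ^ p) ^ ((2:ℝ)/p) := by
  rcases eq_or_lt_of_le hp with rfl | hp2
  · rw [show ((2:ℝ) - 2)/2 = 0 by norm_num, Real.rpow_zero, one_mul,
      show ((2:ℝ))/2 = 1 by norm_num, Real.rpow_one]
    apply le_of_eq
    apply Finset.sum_congr rfl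
    intro i _
    rw [sub_self, Real.rpow_zero, one_mul,
      show ((2:ℝ)) = ((2:ℕ):ℝ) by norm_num, Real.rpow_natCast, sq_abs]
  · have h2 : p - 2 ≠ 0 := by linarith
    have hp0 : p ≠ 0 := by linarith
    have hS' : 0 < Sf p x y t := lt_of_le_of_ne (Sf_nonneg x y t) (Ne.symm hS)
    have hpq : Real.HolderConjugate (p/(p-2)) (p/2) := by
      rw [Real.holderConjugate_iff]
      constructor
      · rw [lt_div_iff₀ (by linarith : (0:ℝ) < p - 2)]; linarith
      · rw [inv_div, inv_div, ← add_div]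
        field_simp
        ring
    have hH := Real.inner_le_Lp_mul_Lq Finset.univ
      (fun i => |x i + t * y i| ^ (p - 2)) (fun i => y i ^ 2) hpq
    have e1 : ∀ i : Fin m, |(|x i + t * y i| ^ (p - 2))| ^ (p/(p-2)) = |x i + t * y i| ^ p := by
      intro i
      rw [abs_of_nonneg (Real.rpow_nonneg (abs_nonneg _) _), ← Real.rpow_mul (abs_nonneg _)]
      congr 1
      field_simp
    have e2 : ∀ i : Fin m, |y i ^ 2| ^ (p/2) = |y i| ^ p := by
      intro i
      rw [abs_of_nonneg (sq_nonneg _),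
        show y i ^ 2 = |y i| ^ (((2:ℕ)):ℝ) by rw [Real.rpow_natCast, sq_abs],
        ← Real.rpow_mul (abs_nonneg _)]
      congr 1
      field_simp
      norm_num
    rw [Finset.sum_congr rfl (fun i _ => e1 i), Finset.sum_congr rfl (fun i _ => e2 i),
      one_div_div, one_div_div] at hH
    calc Sf p x y t ^ ((2-p)/p) * Cf p x y t
        ≤ Sf p x y t ^ ((2-p)/p)
            * (Sf p x y t ^ ((p-2)/p) * (∑ i, |y i| ^ p) ^ ((2:ℝ)/p)) := by
          apply mul_le_mul_of_nonneg_left _ (Real.rpow_nonneg (Sf_nonneg x y t) _)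
          exact hH
      _ = (∑ i, |y i| ^ p) ^ ((2:ℝ)/p) := by
          rw [← mul_assoc, ← Real.rpow_add hS', ← add_div,
            show (2 - p) + (p - 2) = 0 by ring, zero_div, Real.rpow_zero, one_mul]

theorem psi_deriv_le (hp : 2 ≤ p) {t : ℝ} (hS : Sf p x y t ≠ 0) :
    2 * ((2 - p) * Sf p x y t ^ ((2 - 2*p)/p) * Af p x y t ^ 2
        + (p - 1) * Sf p x y t ^ ((2 - p)/p) * Cf p x y t)
      ≤ 2 * (p - 1) * (∑ i, |y i| ^ p) ^ ((2:ℝ)/p) := by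
  have h1 : (2 - p) * Sf p x y t ^ ((2 - 2*p)/p) * Af p x y t ^ 2 ≤ 0 :=
    mul_nonpos_of_nonpos_of_nonneg
      (mul_nonpos_of_nonpos_of_nonneg (by linarith)
        (Real.rpow_nonneg (Sf_nonneg x y t) _)) (sq_nonneg _)
  have h3 : (p - 1) * (Sf p x y t ^ ((2-p)/p) * Cf p x y t)
      ≤ (p - 1) * (∑ i, |y i| ^ p) ^ ((2:ℝ)/p) :=
    mul_le_mul_of_nonneg_left (key_bound x y hp hS) (by linarith)
  nlinarith [h1, h3]

theorem pNorm_sq (hp0 : p ≠ 0) (z : Fin m → ℝ) :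
    pNorm p z ^ 2 = (∑ i, |z i| ^ p) ^ ((2:ℝ)/p) := by
  unfold pNorm
  rw [← Real.rpow_natCast ((∑ i, |z i| ^ p) ^ (1/p)) 2,
    ← Real.rpow_mul (Finset.sum_nonneg fun i _ => Real.rpow_nonneg (abs_nonneg _) _)]
  congr 1
  push_cast
  field_simp

theorem Sf_zero : Sf p x y 0 = ∑ i, |x i| ^ p := by simp [Sf]

theorem Sf_one : Sf p x y 1 = ∑ i, |(x + y) i| ^ p := by simp [Sf]

theorem phi_zero (hp0 : p ≠ 0) : phiF p x y 0 = pNorm p x ^ 2 := by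
  rw [phiF, Sf_zero, pNorm_sq hp0]

theorem phi_one (hp0 : p ≠ 0) : phiF p x y 1 = pNorm p (x + y) ^ 2 := by
  rw [phiF, Sf_one, pNorm_sq hp0]

theorem dual_sum_eq (hp0 : p ≠ 0) :
    ∑ i, dualityMap p x i * y i
      = (∑ i, |x i| ^ p) ^ ((2 - p)/p) * ∑ i, |x i| ^ (p - 2) * x i * y i := by
  have hT : (0:ℝ) ≤ ∑ i, |x i| ^ p :=
    Finset.sum_nonneg fun i _ => Real.rpow_nonneg (abs_nonneg _) _
  rw [Finset.mul_sum]
  apply Finset.sum_congr rfl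
  intro i _
  unfold dualityMap pNorm
  rw [← Real.rpow_mul hT, show 1/p*(2-p) = (2-p)/p by rw [div_mul_eq_mul_div, one_mul]]
  have key := abs_rpow_sign_eq p (x i)
  linear_combination ((∑ i, |x i| ^ p) ^ ((2-p)/p) * y i) * key

theorem psi_zero (hp0 : p ≠ 0) :
    psiF p x y 0 = 2 * ∑ i, dualityMap p x i * y i := by
  rw [dual_sum_eq x y hp0]
  unfold psiF
  rw [Sf_zero]
  have hA : Af p x y 0 = ∑ i, |x i| ^ (p - 2) * x i * y i := by simp [Af]
  rw [hA]
  ring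

end XuAux
namespace XuAux

variable {m : ℕ} {p : ℝ} (y : Fin m → ℝ)

theorem pNorm_scale (hp0 : 0 < p) (c : ℝ) (x : Fin m → ℝ) (hx : ∀ i, x i = c * y i) :
    pNorm p x = |c| * pNorm p y := by
  unfold pNorm
  have h : ∀ i ∈ Finset.univ, |x i| ^ p = |c| ^ p * |y i| ^ p := fun i _ => by
    rw [hx i, abs_mul, Real.mul_rpow (abs_nonneg _) (abs_nonneg _)]
  rw [Finset.sum_congr rfl h, ← Finset.mul_sum,
    Real.mul_rpow (Real.rpow_nonneg (abs_nonneg _) _)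
      (Finset.sum_nonneg fun i _ => Real.rpow_nonneg (abs_nonneg _) _),
    ← Real.rpow_mul (abs_nonneg c), mul_one_div, div_self (ne_of_gt hp0), Real.rpow_one]

theorem dual_scale (hp : 2 ≤ p) (c : ℝ) (x : Fin m → ℝ) (hx : ∀ i, x i = c * y i) :
    ∑ i, dualityMap p x i * y i = c * pNorm p y ^ 2 := by
  have hp0 : (0:ℝ) < p := by linarith
  rcases eq_or_ne c 0 with rfl | hc
  · have hx0 : ∀ i, x i = 0 := fun i => by rw [hx i]; ring
    simp [dualityMap, hx0, Real.sign_zero]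
  · by_cases hy : y = 0
    · subst hy
      have hzero : pNorm p (0 : Fin m → ℝ) = 0 := by
        simp [pNorm, Real.zero_rpow (ne_of_gt hp0),
          Real.zero_rpow (inv_ne_zero (ne_of_gt hp0))]
      simp [dualityMap, Real.sign_zero,
        fun i => ((hx i).trans (mul_zero c) : x i = 0), hzero]
    · obtain ⟨j, hj⟩ := Function.ne_iff.1 hy
      have hT : (0:ℝ) < ∑ i, |y i| ^ p := by
        apply Finset.sum_pos' (fun i _ => Real.rpow_nonneg (abs_nonneg _) _)
        exact ⟨j, Finset.mem_univ j, Real.rpow_pos_of_pos (abs_pos.2 hj) p⟩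
      have hx1 : (∑ i, |x i| ^ p) = |c| ^ p * ∑ i, |y i| ^ p := by
        rw [Finset.mul_sum]
        exact Finset.sum_congr rfl fun i _ => by
          rw [hx i, abs_mul, Real.mul_rpow (abs_nonneg _) (abs_nonneg _)]
      have hx2 : (∑ i, |x i| ^ (p - 2) * x i * y i)
          = |c| ^ (p - 2) * c * ∑ i, |y i| ^ p := by
        rw [Finset.mul_sum]
        apply Finset.sum_congr rfl
        intro i _
        rw [hx i, abs_mul, Real.mul_rpow (abs_nonneg _) (abs_nonneg _),
          ← abs_rpow_mul_sq p hp (y i)]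
        ring
      rw [dual_sum_eq x y (ne_of_gt hp0), hx1, hx2, pNorm_sq (ne_of_gt hp0),
        Real.mul_rpow (Real.rpow_nonneg (abs_nonneg c) p) hT.le,
        ← Real.rpow_mul (abs_nonneg c), show p * ((2 - p)/p) = 2 - p by field_simp]
      have hc1 : |c| ^ ((2:ℝ) - p) * |c| ^ (p - 2) = 1 := by
        rw [← Real.rpow_add (abs_pos.2 hc)]
        norm_num
      have hT1 : (∑ i, |y i| ^ p) ^ ((2 - p)/p) * (∑ i, |y i| ^ p)
          = (∑ i, |y i| ^ p) ^ ((2:ℝ)/p) := by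
        calc (∑ i, |y i| ^ p) ^ ((2 - p)/p) * (∑ i, |y i| ^ p)
            = (∑ i, |y i| ^ p) ^ ((2 - p)/p) * (∑ i, |y i| ^ p) ^ (1:ℝ) := by
              rw [Real.rpow_one]
          _ = (∑ i, |y i| ^ p) ^ ((2 - p)/p + 1) := (Real.rpow_add hT _ _).symm
          _ = (∑ i, |y i| ^ p) ^ ((2:ℝ)/p) := by
              congr 1
              field_simp
              ring
      calc |c| ^ ((2:ℝ) - p) * (∑ i, |y i| ^ p) ^ ((2 - p)/p)
            * (|c| ^ (p - 2) * c * ∑ i, |y i| ^ p)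
          = (|c| ^ ((2:ℝ) - p) * |c| ^ (p - 2))
            * ((∑ i, |y i| ^ p) ^ ((2 - p)/p) * (∑ i, |y i| ^ p)) * c := by ring
        _ = c * (∑ i, |y i| ^ p) ^ ((2:ℝ)/p) := by rw [hc1, hT1]; ring

end XuAux
/-- 2-smoothness of `ℓ_p^m` for `2 ≤ p < ∞` (Xu 1991):
`‖x + y‖_p² ≤ ‖x‖_p² + 2⟨J(x), y⟩ + (p-1)‖y‖_p²`. -/
theorem lp_two_smoothness {m : ℕ} (p : ℝ) (hp : 2 ≤ p) (x y : Fin m → ℝ) :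
    pNorm p (x + y) ^ 2
      ≤ pNorm p x ^ 2 + 2 * (∑ i, dualityMap p x i * y i) + (p - 1) * pNorm p y ^ 2 := by
  have hp0 : (0:ℝ) < p := by linarith
  have hp0' : p ≠ 0 := ne_of_gt hp0
  by_cases hz : ∀ t ∈ Set.Icc (0:ℝ) 1, XuAux.Sf p x y t ≠ 0
  · set Y2 := (∑ i, |y i| ^ p) ^ ((2:ℝ)/p) with hY2
    have hY2' : pNorm p y ^ 2 = Y2 := XuAux.pNorm_sq hp0' y
    have key : ∀ t ∈ Set.Icc (0:ℝ) 1,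
        XuAux.psiF p x y t ≤ XuAux.psiF p x y 0 + 2*(p-1)*Y2*t := by
      have hlin : ∀ t : ℝ, HasDerivAt (fun s : ℝ => 2*(p-1)*Y2*s) (2*(p-1)*Y2) t := by
        intro t; simpa using (hasDerivAt_id t).const_mul (2*(p-1)*Y2)
      have hH : AntitoneOn (fun t => XuAux.psiF p x y t - 2*(p-1)*Y2*t)
          (Set.Icc 0 1) := by
        apply antitoneOn_of_deriv_nonpos (convex_Icc 0 1)
        · intro t ht
          exact ((XuAux.hasDerivAt_psi x y hp (hz t ht)).sub
            (hlin t)).continuousAt.continuousWithinAt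
        · rw [interior_Icc]
          intro t ht
          exact ((XuAux.hasDerivAt_psi x y hp (hz t (Set.mem_Icc_of_Ioo ht))).sub
            (hlin t)).differentiableAt.differentiableWithinAt
        · rw [interior_Icc]
          intro t ht
          have hd := (XuAux.hasDerivAt_psi x y hp (hz t (Set.mem_Icc_of_Ioo ht))).fun_sub (hlin t)
          rw [hd.deriv]
          have hple := XuAux.psi_deriv_le x y hp (hz t (Set.mem_Icc_of_Ioo ht))
          rw [← hY2] at hple
          linarith
      intro t ht
      have h0 : (0:ℝ) ∈ Set.Icc (0:ℝ) 1 := Set.left_mem_Icc.2 zero_le_one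
      have := hH h0 ht ht.1
      simp only [mul_zero, sub_zero] at this
      linarith
    have hG : AntitoneOn
        (fun t => XuAux.phiF p x y t - XuAux.psiF p x y 0 * t - (p-1)*Y2*t^2)
        (Set.Icc 0 1) := by
      have ha : ∀ t : ℝ, HasDerivAt (fun s : ℝ => XuAux.psiF p x y 0 * s)
          (XuAux.psiF p x y 0) t := by
        intro t; simpa using (hasDerivAt_id t).const_mul (XuAux.psiF p x y 0)
      have hb : ∀ t : ℝ, HasDerivAt (fun s : ℝ => (p-1)*Y2*s^2) ((p-1)*Y2*(2*t)) t := by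
        intro t
        have := (hasDerivAt_pow 2 t).const_mul ((p-1)*Y2)
        simpa [mul_assoc, mul_comm] using this
      apply antitoneOn_of_deriv_nonpos (convex_Icc 0 1)
      · intro t ht
        exact (((XuAux.hasDerivAt_phi x y hp (hz t ht)).sub (ha t)).sub
          (hb t)).continuousAt.continuousWithinAt
      · rw [interior_Icc]
        intro t ht
        exact (((XuAux.hasDerivAt_phi x y hp (hz t (Set.mem_Icc_of_Ioo ht))).sub (ha t)).sub
          (hb t)).differentiableAt.differentiableWithinAt
      · rw [interior_Icc]
        intro t ht
        have hd := ((XuAux.hasDerivAt_phi x y hp (hz t (Set.mem_Icc_of_Ioo ht))).fun_sub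
          (ha t)).fun_sub (hb t)
        rw [hd.deriv]
        have := key t (Set.mem_Icc_of_Ioo ht)
        linarith
    have h0 : (0:ℝ) ∈ Set.Icc (0:ℝ) 1 := Set.left_mem_Icc.2 zero_le_one
    have h1 : (1:ℝ) ∈ Set.Icc (0:ℝ) 1 := Set.right_mem_Icc.2 zero_le_one
    have hfin := hG h0 h1 zero_le_one
    simp only [mul_zero, mul_one, one_pow, sub_zero] at hfin
    have e0 := XuAux.phi_zero x y hp0'
    have e1 := XuAux.phi_one x y hp0'
    have e2 := XuAux.psi_zero x y hp0'
    norm_num at hfin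
    rw [e0, e1, e2] at hfin
    rw [hY2']
    linarith
  · push_neg at hz
    obtain ⟨t₀, ht₀, hS0⟩ := hz
    have hzero : ∀ i, x i + t₀ * y i = 0 := by
      intro i
      have hnn : ∀ j ∈ Finset.univ, (0:ℝ) ≤ |x j + t₀ * y j| ^ p :=
        fun j _ => Real.rpow_nonneg (abs_nonneg _) _
      have hterm := (Finset.sum_eq_zero_iff_of_nonneg hnn).1 hS0 i (Finset.mem_univ i)
      by_contra h
      have hpos : (0:ℝ) < |x i + t₀ * y i| ^ p :=
        Real.rpow_pos_of_pos (abs_pos.2 h) p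
      linarith
    have hx : ∀ i, x i = (-t₀) * y i := fun i => by have := hzero i; linarith
    have hxy : ∀ i, (x + y) i = (1 - t₀) * y i := fun i => by
      have := hzero i
      simp only [Pi.add_apply]
      linarith
    rw [XuAux.pNorm_scale y hp0 (1 - t₀) (x + y) hxy,
      XuAux.pNorm_scale y hp0 (-t₀) x hx,
      XuAux.dual_scale y hp (-t₀) x hx]
    have hNn : (0:ℝ) ≤ pNorm p y :=
      Real.rpow_nonneg (Finset.sum_nonneg fun i _ => Real.rpow_nonneg (abs_nonneg _) _) _
    rw [mul_pow, mul_pow, sq_abs, sq_abs]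
    nlinarith [mul_nonneg (by linarith : (0:ℝ) ≤ p - 2) (sq_nonneg (pNorm p y))]
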